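/- arXiv:math/9401225 — 2 statements merged into one kernel-verified Lean document; each statement's English description precedes it below -/
import Mathlib

section
/- Let j ⊂ t be bounded intervals with components l, r of t \ j, and suppose a map f sends l, j, r, t homeomorphically onto intervals L, J, R, T with |l|,|r|,|L|,|R| > 0. If B(f,t,j) := (|T|·|J|·|l|·|r|)/(|t|·|j|·|L|·|R|) ≥ Ω and j is shrunk to a single point {x} at the right endpoint of l at which f is differentiable, then in the limit one obtains |f'(x)| ≥ Ω · (|L|/|l|) · (|R|/|T|). -/
/-!
As `j = [x, y]` shrinks to `x`, the cross-ratio distortion `B(f, [p, s], [x, y])` factors as a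
constant times the slope of `f` on `j` times `|r| / |R|`, so it converges to
`(|T| |l|) / (|t| |L|) · f'(x) · |r| / |R|` with `r = [x, s]`. The hypothesis bounds this limit
below by `Ω`, and solving for `f'(x)` gives the claim up to the factor `|r| / |t| ≤ 1`.
-/

open Filter Topology Set

/-- The cross-ratio distortion `B(f, t, j)` for `t = [p, s]` and `j = [a, b]`, so that
`l = [p, a]` and `r = [b, s]`. -/
noncomputable def crossRatioDistortion (f : ℝ → ℝ) (p a b s : ℝ) : ℝ :=
  ((f s - f p) * (f b - f a) * (a - p) * (s - b)) /
    ((s - p) * (b - a) * (f a - f p) * (f s - f b))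

theorem crossRatioDistortion_eq_mul_slope (f : ℝ → ℝ) (p a b s : ℝ) :
    crossRatioDistortion f p a b s =
      (f s - f p) * (a - p) / ((s - p) * (f a - f p)) * slope f a b * ((s - b) / (f s - f b)) := by
  rw [crossRatioDistortion, slope_def_field, ← mul_div_mul_comm, ← mul_div_mul_comm]
  ring_nf

theorem tendsto_crossRatioDistortion_nhdsNE {f : ℝ → ℝ} {d a : ℝ} (p s : ℝ)
    (hd : HasDerivAt f d a) (hfs : f s ≠ f a) :
    Tendsto (fun b => crossRatioDistortion f p a b s) (𝓝[≠] a)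
      (𝓝 ((f s - f p) * (a - p) / ((s - p) * (f a - f p)) * d * ((s - a) / (f s - f a)))) := by
  simp only [crossRatioDistortion_eq_mul_slope]
  have hr : Tendsto (fun b => (s - b) / (f s - f b)) (𝓝 a) (𝓝 ((s - a) / (f s - f a))) :=
    (tendsto_const_nhds.sub tendsto_id).div (tendsto_const_nhds.sub hd.continuousAt)
      (sub_ne_zero.mpr hfs)
  exact (tendsto_const_nhds.mul (hasDerivAt_iff_tendsto_slope.mp hd)).mul
    (hr.mono_left nhdsWithin_le_nhds)

theorem le_abs_of_le_crossRatioLimit {Ω d u v w A B C : ℝ} (hu : 0 < u) (hv : 0 < v)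
    (hvw : v ≤ w) (hA : 0 < A) (hB : 0 < B) (hC : 0 < C)
    (h : Ω ≤ C * u / (w * A) * d * (v / B)) :
    Ω * (A / u) * (B / C) ≤ |d| := by
  have hw : 0 < w := hv.trans_le hvw
  have hN : 0 < A / u * (B / C) := by positivity
  calc Ω * (A / u) * (B / C) = Ω * (A / u * (B / C)) := by ring
    _ ≤ C * u / (w * A) * d * (v / B) * (A / u * (B / C)) := by gcongr
    _ = d * (v / w) := by field_simp
    _ ≤ |d| * (v / w) := by gcongr; exact le_abs_self d
    _ ≤ |d| := mul_le_of_le_one_right (abs_nonneg d) ((div_le_one hw).mpr hvw)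

theorem deriv_lower_bound_from_cross_ratio_general (f : ℝ → ℝ) (p x s Ω d : ℝ)
    (hpx : p < x) (hxs : x < s)
    (hmono : StrictMonoOn f (Set.Icc p s))
    (hd : HasDerivAt f d x)
    (hB : ∀ y, x < y → y < s →
      Ω ≤ ((f s - f p) * (f y - f x) * (x - p) * (s - y)) /
          ((s - p) * (y - x) * (f x - f p) * (f s - f y))) :
    |d| ≥ Ω * ((f x - f p) / (x - p)) * ((f s - f x) / (f s - f p)) := by
  have hp : p ∈ Icc p s := left_mem_Icc.mpr (hpx.trans hxs).le
  have hx : x ∈ Icc p s := ⟨hpx.le, hxs.le⟩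
  have hs : s ∈ Icc p s := right_mem_Icc.mpr (hpx.trans hxs).le
  have hfxs : f x < f s := hmono hx hs hxs
  have hlim :
      Ω ≤ (f s - f p) * (x - p) / ((s - p) * (f x - f p)) * d * ((s - x) / (f s - f x)) :=
    ge_of_tendsto
      ((tendsto_crossRatioDistortion_nhdsNE p s hd hfxs.ne').mono_left (nhdsGT_le_nhdsNE x))
      (eventually_of_mem (Ioo_mem_nhdsGT hxs) fun y hy => hB y hy.1 hy.2)
  exact le_abs_of_le_crossRatioLimit (sub_pos.mpr hpx) (sub_pos.mpr hxs) (by linarith)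
    (sub_pos.mpr (hmono hp hx hpx)) (sub_pos.mpr hfxs)
    (sub_pos.mpr (hmono hp hs (hpx.trans hxs))) hlim

theorem deriv_lower_bound_from_cross_ratio (f : ℝ → ℝ) (p x s Ω d : ℝ)
    (hpx : p < x) (hxs : x < s) (hΩ : 0 < Ω)
    (hmono : StrictMonoOn f (Set.Icc p s))
    (hd : HasDerivAt f d x)
    (hB : ∀ y, x < y → y < s →
      Ω ≤ ((f s - f p) * (f y - f x) * (x - p) * (s - y)) /
          ((s - p) * (y - x) * (f x - f p) * (f s - f y))) :
    |d| ≥ Ω * ((f x - f p) / (x - p)) * ((f s - f x) / (f s - f p)) :=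
  deriv_lower_bound_from_cross_ratio_general f p x s Ω d hpx hxs hmono hd hB
end

section
/- Let f : ℝ → ℝ be three times continuously differentiable on an open interval t with f' > 0 on t, and suppose the Schwarzian derivative Sf = f'''/f' − (3/2)(f''/f')² is ≤ 0 on t. Then for every subinterval j ⊂ t whose complement t \ j has two components l, r of positive length, the cross-ratio distortion satisfies B(f,t,j) = (|f(t)|·|f(j)|·|l|·|r|)/(|t|·|j|·|f(l)|·|f(r)|) ≥ 1. -/
/-!
Compose `f` with the Möbius map `M` sending `f p, f q, f s` to `p, q, s`. Cross-ratios are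
Möbius invariant, so it suffices to show that `g = M ∘ f`, which fixes `p, q, s`, satisfies
`r ≤ g r`. Every `(α f + β) / √f'` solves `y'' = -(Sf / 2) y`, hence is convex where it is
nonnegative when `Sf ≤ 0`; `1 / √g'` is of this form. By the mean value theorem `g' = 1` at some
`ξ₁ ∈ (p, q)` and `ξ₂ ∈ (q, s)`, so convexity gives `g' ≥ 1` on `[ξ₁, ξ₂]` and `g' ≤ 1` beyond
`ξ₂`; the mean value theorem on `[q, r]` or on `[r, s]` then yields `r ≤ g r`.
-/

open Set

noncomputable def schwarzian (f : ℝ → ℝ) (x : ℝ) : ℝ :=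
  deriv (deriv (deriv f)) x / deriv f x - 3 / 2 * (deriv (deriv f) x / deriv f x) ^ 2

section Field

variable {K : Type*} [Field K]

def mobius (a b c d y : K) : K := (a * y + b) / (c * y + d)

/-- For `w < x < y < z` this is `|T| |J| / (|L| |R|)` with `T = (w, z)`, `J = (x, y)`,
`L = (w, x)` and `R = (y, z)`. -/
def crossRatio (w x y z : K) : K := (z - w) * (y - x) / ((x - w) * (z - y))

theorem mobius_div_div (a b c d y : K) {t : K} (ht : t ≠ 0) :
    mobius (a / t) (b / t) (c / t) (d / t) y = mobius a b c d y := by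
  rw [mobius, mobius, div_mul_eq_mul_div, div_mul_eq_mul_div, ← add_div, ← add_div,
    div_div_div_cancel_right₀ ht]

theorem mobius_sub_mobius {a b c d x y : K} (hx : c * x + d ≠ 0) (hy : c * y + d ≠ 0) :
    mobius a b c d y - mobius a b c d x =
      (a * d - b * c) * (y - x) / ((c * x + d) * (c * y + d)) := by
  rw [mobius, mobius, div_sub_div _ _ hy hx,
    div_eq_div_iff (mul_ne_zero hy hx) (mul_ne_zero hx hy)]
  ring

theorem crossRatio_mobius {a b c d w x y z : K} (hdet : a * d - b * c ≠ 0)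
    (hw : c * w + d ≠ 0) (hx : c * x + d ≠ 0) (hy : c * y + d ≠ 0) (hz : c * z + d ≠ 0) :
    crossRatio (mobius a b c d w) (mobius a b c d x) (mobius a b c d y) (mobius a b c d z) =
      crossRatio w x y z := by
  set k := (a * d - b * c) ^ 2 / ((c * w + d) * (c * x + d) * (c * y + d) * (c * z + d))
  have hk : k ≠ 0 := div_ne_zero (pow_ne_zero 2 hdet) (by simp [*])
  have hnum : (mobius a b c d z - mobius a b c d w) * (mobius a b c d y - mobius a b c d x) =
      k * ((z - w) * (y - x)) := by
    rw [mobius_sub_mobius hw hz, mobius_sub_mobius hx hy]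
    simp only [k]
    field_simp
  have hden : (mobius a b c d x - mobius a b c d w) * (mobius a b c d z - mobius a b c d y) =
      k * ((x - w) * (z - y)) := by
    rw [mobius_sub_mobius hw hx, mobius_sub_mobius hy hz]
    simp only [k]
    field_simp
  rw [crossRatio, hnum, hden, mul_div_mul_left _ _ hk, crossRatio]

end Field

section LinearOrderedField

variable {K : Type*} [Field K] [LinearOrder K] [IsStrictOrderedRing K]

theorem mobius_lt_mobius {a b c d x y : K} (hdet : 0 < a * d - b * c) (hx : 0 < c * x + d)
    (hy : 0 < c * y + d) (hxy : x < y) : mobius a b c d x < mobius a b c d y := by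
  rw [← sub_pos, mobius_sub_mobius hx.ne' hy.ne']
  exact div_pos (mul_pos hdet (sub_pos.2 hxy)) (mul_pos hx hy)

theorem crossRatio_pos {w x y z : K} (hwx : w < x) (hxy : x < y) (hyz : y < z) :
    0 < crossRatio w x y z := by
  rw [crossRatio]
  have := sub_pos.2 hwx
  have := sub_pos.2 hxy
  have := sub_pos.2 hyz
  have := sub_pos.2 (hwx.trans (hxy.trans hyz))
  positivity

theorem crossRatio_le_crossRatio {p q r y s : K} (hpq : p < q) (hqr : q < r) (hry : r ≤ y)
    (hys : y < s) : crossRatio p q r s ≤ crossRatio p q y s := by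
  have hsp : 0 < s - p := by linarith
  rw [crossRatio, crossRatio, div_le_div_iff₀ (by nlinarith) (by nlinarith)]
  nlinarith [mul_pos (mul_pos hsp hsp) (sub_pos.2 hpq),
    mul_nonneg (mul_nonneg (mul_nonneg hsp.le hsp.le) (sub_pos.2 hpq).le) (sub_nonneg.2 hry)]

end LinearOrderedField

theorem HasDerivAt.mobius {𝕜 : Type*} [NontriviallyNormedField 𝕜] {f : 𝕜 → 𝕜} {f' x a b c d : 𝕜}
    (hf : HasDerivAt f f' x) (hx : c * f x + d ≠ 0) :
    HasDerivAt (fun y => mobius a b c d (f y)) ((a * d - b * c) * f' / (c * f x + d) ^ 2) x := by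
  refine (((hf.const_mul a).add_const b).div ((hf.const_mul c).add_const d) hx).congr_deriv ?_
  ring

theorem exists_mobius_maps_three_points {u₁ u₂ u₃ p q s : ℝ} (hu₁₂ : u₁ < u₂) (hu₂₃ : u₂ < u₃)
    (hpq : p < q) (hqs : q < s) :
    ∃ a b c d : ℝ, a * d - b * c = 1 ∧ (∀ y ∈ Icc u₁ u₃, 0 < c * y + d) ∧
      mobius a b c d u₁ = p ∧ mobius a b c d u₂ = q ∧ mobius a b c d u₃ = s := by
  -- `M y = (p (u₃ - y) + k s (y - u₁)) / ((u₃ - y) + k (y - u₁))` with `k` chosen so that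
  -- `M u₂ = q`, rescaled by the square root of its determinant `k (s - p) (u₃ - u₁)`.
  obtain ⟨k, hk, hkq⟩ : ∃ k : ℝ, 0 < k ∧ k * ((u₂ - u₁) * (s - q)) = (u₃ - u₂) * (q - p) :=
    ⟨(u₃ - u₂) * (q - p) / ((u₂ - u₁) * (s - q)),
      div_pos (by nlinarith) (by nlinarith), div_mul_cancel₀ _ (by nlinarith)⟩
  have hden {y : ℝ} (hy : y ∈ Icc u₁ u₃) : 0 < (k - 1) * y + (u₃ - k * u₁) := by
    rcases hy.2.eq_or_lt with rfl | _
    · nlinarith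
    · nlinarith [hy.1]
  have hdet : 0 < k * (s - p) * (u₃ - u₁) := by
    have := hpq.trans hqs
    have := hu₁₂.trans hu₂₃
    positivity
  set t := √(k * (s - p) * (u₃ - u₁))
  have ht : 0 < t := Real.sqrt_pos.2 hdet
  have ht2 : t ^ 2 = k * (s - p) * (u₃ - u₁) := Real.sq_sqrt hdet.le
  refine ⟨(k * s - p) / t, (p * u₃ - k * s * u₁) / t, (k - 1) / t, (u₃ - k * u₁) / t,
    ?_, fun y hy => ?_, ?_, ?_, ?_⟩
  · field_simp
    linear_combination -ht2
  · calc (0 : ℝ) < ((k - 1) * y + (u₃ - k * u₁)) / t := div_pos (hden hy) ht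
      _ = _ := by ring
  · rw [mobius_div_div _ _ _ _ _ ht.ne', mobius, div_eq_iff
      (hden ⟨le_rfl, (hu₁₂.trans hu₂₃).le⟩).ne']
    ring
  · rw [mobius_div_div _ _ _ _ _ ht.ne', mobius, div_eq_iff
      (hden ⟨hu₁₂.le, hu₂₃.le⟩).ne']
    linear_combination hkq
  · rw [mobius_div_div _ _ _ _ _ ht.ne', mobius, div_eq_iff
      (hden ⟨(hu₁₂.trans hu₂₃).le, le_rfl⟩).ne']
    ring

theorem HasDerivAt.inv_sqrt {φ : ℝ → ℝ} {φ' x : ℝ} (hφ : HasDerivAt φ φ' x) (hpos : 0 < φ x) :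
    HasDerivAt (fun y => (√(φ y))⁻¹) (-(φ' / (2 * φ x)) * (√(φ x))⁻¹) x := by
  have hsqrt : 0 < √(φ x) := Real.sqrt_pos.2 hpos
  refine ((hφ.sqrt hpos.ne').inv hsqrt.ne').congr_deriv ?_
  rw [Real.sq_sqrt hpos.le]
  field_simp

section AffineMulInvSqrt

variable {f f₁ f₂ : ℝ → ℝ} {x f₃ α β : ℝ}

theorem hasDerivAt_affine_mul_inv_sqrt (h₀ : HasDerivAt f (f₁ x) x)
    (h₁ : HasDerivAt f₁ (f₂ x) x) (hpos : 0 < f₁ x) :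
    HasDerivAt (fun y => (α * f y + β) * (√(f₁ y))⁻¹)
      ((α * f₁ x - (α * f x + β) * (f₂ x / (2 * f₁ x))) * (√(f₁ x))⁻¹) x := by
  refine (((h₀.const_mul α).add_const β).mul (h₁.inv_sqrt hpos)).congr_deriv ?_
  ring

theorem hasDerivAt_deriv_affine_mul_inv_sqrt (h₀ : HasDerivAt f (f₁ x) x)
    (h₁ : HasDerivAt f₁ (f₂ x) x) (h₂ : HasDerivAt f₂ f₃ x) (hpos : 0 < f₁ x) :
    HasDerivAt (fun y => (α * f₁ y - (α * f y + β) * (f₂ y / (2 * f₁ y))) * (√(f₁ y))⁻¹)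
      (-((f₃ / f₁ x - 3 / 2 * (f₂ x / f₁ x) ^ 2) / 2) * ((α * f x + β) * (√(f₁ x))⁻¹)) x := by
  have h₂₁ := h₂.div (h₁.const_mul 2) (by positivity)
  refine (((h₁.const_mul α).sub (((h₀.const_mul α).add_const β).mul h₂₁)).mul
    (h₁.inv_sqrt hpos)).congr_deriv ?_
  simp only [Pi.sub_apply, Pi.mul_apply, Pi.div_apply]
  field_simp
  ring

end AffineMulInvSqrt

theorem convexOn_affine_mul_inv_sqrt_deriv {f : ℝ → ℝ} {U : Set ℝ} {α β : ℝ} (hU : IsOpen U)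
    (hUc : Convex ℝ U) (hf : ContDiffOn ℝ 3 f U) (hpos : ∀ x ∈ U, 0 < deriv f x)
    (hS : ∀ x ∈ U, schwarzian f x ≤ 0) (hu : ∀ x ∈ U, 0 ≤ α * f x + β) :
    ConvexOn ℝ U fun x => (α * f x + β) * (√(deriv f x))⁻¹ := by
  have hf₁ : ContDiffOn ℝ 2 (deriv f) U := hf.deriv_of_isOpen hU (by norm_num)
  have hf₂ : ContDiffOn ℝ 1 (deriv (deriv f)) U := hf₁.deriv_of_isOpen hU (by norm_num)
  have hasDerivAt_of {g : ℝ → ℝ} {n : WithTop ℕ∞} (hg : ContDiffOn ℝ n g U) (hn : n ≠ 0)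
      {x : ℝ} (hx : x ∈ U) : HasDerivAt g (deriv g x) x :=
    ((hg.differentiableOn hn).differentiableAt (hU.mem_nhds hx)).hasDerivAt
  have hH {x : ℝ} (hx : x ∈ U) := hasDerivAt_affine_mul_inv_sqrt (α := α) (β := β)
    (hasDerivAt_of hf (by simp) hx) (hasDerivAt_of hf₁ (by simp) hx) (hpos x hx)
  have hH' {x : ℝ} (hx : x ∈ U) := hasDerivAt_deriv_affine_mul_inv_sqrt (α := α) (β := β)
    (hasDerivAt_of hf (by simp) hx) (hasDerivAt_of hf₁ (by simp) hx)
    (hasDerivAt_of hf₂ (by simp) hx) (hpos x hx)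
  have hcont : ContinuousOn (fun x => (α * f x + β) * (√(deriv f x))⁻¹) U := fun x hx =>
    (hH hx).continuousAt.continuousWithinAt
  rw [← hU.interior_eq] at hH hH' hS hu
  refine convexOn_of_hasDerivWithinAt2_nonneg hUc hcont (fun x hx => (hH hx).hasDerivWithinAt)
    (fun x hx => (hH' hx).hasDerivWithinAt) fun x hx => ?_
  exact mul_nonneg (neg_nonneg.2 (div_nonpos_of_nonpos_of_nonneg (hS x hx) zero_le_two))
    (mul_nonneg (hu x hx) (by positivity))

theorem le_apply_of_fixes_of_convexOn {g g' φ : ℝ → ℝ} {p q r s : ℝ} (hpq : p < q) (hqr : q < r)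
    (hrs : r < s) (hg : ContinuousOn g (Icc p s)) (hg' : ∀ x ∈ Ioo p s, HasDerivAt g (g' x) x)
    (hφ : ConvexOn ℝ (Ioo p s) φ) (hφpos : ∀ x ∈ Ioo p s, 0 < φ x)
    (hg'φ : ∀ x ∈ Ioo p s, g' x = (φ x ^ 2)⁻¹) (hp : g p = p) (hq : g q = q) (hs : g s = s) :
    r ≤ g r := by
  have mvt {a b : ℝ} (ha : p ≤ a) (hab : a < b) (hb : b ≤ s) :
      ∃ η ∈ Ioo a b, η ∈ Ioo p s ∧ g' η = (g b - g a) / (b - a) := by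
    obtain ⟨η, hη, hslope⟩ := exists_hasDerivAt_eq_slope g g' hab
      (hg.mono (Icc_subset_Icc ha hb)) fun x hx => hg' x ⟨ha.trans_lt hx.1, hx.2.trans_le hb⟩
    exact ⟨η, hη, ⟨ha.trans_lt hη.1, hη.2.trans_le hb⟩, hslope⟩
  have φ_eq_one {a b : ℝ} (hab : a < b) (ha : g a = a) (hb : g b = b) {ξ : ℝ} (hξ : ξ ∈ Ioo p s)
      (hslope : g' ξ = (g b - g a) / (b - a)) : φ ξ = 1 := by
    rwa [ha, hb, div_self (sub_ne_zero.2 hab.ne'), hg'φ ξ hξ, inv_eq_one,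
      pow_eq_one_iff_of_nonneg (hφpos ξ hξ).le two_ne_zero] at hslope
  obtain ⟨ξ₁, hξ₁, hξ₁ps, h₁⟩ := mvt le_rfl hpq (by linarith)
  obtain ⟨ξ₂, hξ₂, hξ₂ps, h₂⟩ := mvt hpq.le (hqr.trans hrs) le_rfl
  have hφ₁ : φ ξ₁ = 1 := φ_eq_one hpq hp hq hξ₁ps h₁
  have hφ₂ : φ ξ₂ = 1 := φ_eq_one (hqr.trans hrs) hq hs hξ₂ps h₂
  rcases le_or_gt r ξ₂ with hr | hr
  · obtain ⟨η, hη, hηps, hslope⟩ := mvt hpq.le hqr hrs.le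
    have hφη : φ η ≤ 1 := by
      have hmem : η ∈ segment ℝ ξ₁ ξ₂ := by
        rw [segment_eq_Icc (hξ₁.2.trans hξ₂.1).le]
        exact ⟨(hξ₁.2.trans hη.1).le, (hη.2.trans_le hr).le⟩
      simpa [hφ₁, hφ₂] using hφ.le_on_segment hξ₁ps hξ₂ps hmem
    have : 1 ≤ g' η := by
      rw [hg'φ η hηps, one_le_inv₀ (by simp [hφpos η hηps])]
      exact pow_le_one₀ (hφpos η hηps).le hφη
    rw [hslope, hq, le_div_iff₀ (sub_pos.2 hqr)] at this
    linarith
  · obtain ⟨η, hη, hηps, hslope⟩ := mvt (hpq.trans hqr).le hrs le_rfl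
    have hφη : 1 ≤ φ η := hφ₂ ▸ hφ.le_right_of_left_le'' hξ₁ps hηps (hξ₁.2.trans hξ₂.1)
      (hr.trans hη.1).le (by rw [hφ₁, hφ₂])
    have : g' η ≤ 1 := by
      rw [hg'φ η hηps]
      exact inv_le_one_of_one_le₀ (one_le_pow₀ hφη)
    rw [hslope, hs, div_le_one (sub_pos.2 hrs)] at this
    linarith

theorem le_mobius_comp_of_schwarzian_nonpos {f : ℝ → ℝ} {a b c d p q r s : ℝ} (hpq : p < q)
    (hqr : q < r) (hrs : r < s) (hf : ContDiffOn ℝ 3 f (Icc p s))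
    (hpos : ∀ x ∈ Ioo p s, 0 < deriv f x) (hS : ∀ x ∈ Ioo p s, schwarzian f x ≤ 0)
    (hdet : a * d - b * c = 1) (hden : ∀ x ∈ Icc p s, 0 < c * f x + d)
    (hp : mobius a b c d (f p) = p) (hq : mobius a b c d (f q) = q)
    (hs : mobius a b c d (f s) = s) :
    r ≤ mobius a b c d (f r) := by
  refine le_apply_of_fixes_of_convexOn hpq hqr hrs (g := fun x => mobius a b c d (f x))
    (g' := fun x => deriv f x / (c * f x + d) ^ 2)
    (φ := fun x => (c * f x + d) * (√(deriv f x))⁻¹) ?_ (fun x hx => ?_)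
    (convexOn_affine_mul_inv_sqrt_deriv isOpen_Ioo (convex_Ioo p s)
      (hf.mono Ioo_subset_Icc_self) hpos hS fun x hx => (hden x (Ioo_subset_Icc_self hx)).le)
    (fun x hx => ?_) (fun x hx => ?_) hp hq hs
  · have hfc := hf.continuousOn
    exact ContinuousOn.div (by fun_prop) (by fun_prop) fun x hx => (hden x hx).ne'
  · have hfx := (hf.differentiableOn (by simp)).differentiableAt (Icc_mem_nhds hx.1 hx.2)
    exact (hfx.hasDerivAt.mobius (hden x (Ioo_subset_Icc_self hx)).ne').congr_deriv
      (by rw [hdet, one_mul])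
  · have := hden x (Ioo_subset_Icc_self hx)
    have := hpos x hx
    positivity
  · rw [mul_pow, inv_pow, Real.sq_sqrt (hpos x hx).le]
    field_simp

theorem cross_ratio_expanded_of_schwarzian_nonpos (f : ℝ → ℝ) (p q r s : ℝ)
    (hpq : p < q) (hqr : q < r) (hrs : r < s)
    (hC : ContDiffOn ℝ 3 f (Set.Icc p s))
    (hpos : ∀ x ∈ Set.Icc p s, 0 < deriv f x)
    (hS : ∀ x ∈ Set.Ioo p s,
      deriv (deriv (deriv f)) x / deriv f x
        - (3 / 2) * (deriv (deriv f) x / deriv f x) ^ 2 ≤ 0) :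
    1 ≤ ((f s - f p) * (f r - f q) * (q - p) * (s - r)) /
        ((s - p) * (r - q) * (f q - f p) * (f s - f r)) := by
  have hqs : q < s := hqr.trans hrs
  obtain ⟨hpI, hqI, hrI, hsI⟩ : p ∈ Icc p s ∧ q ∈ Icc p s ∧ r ∈ Icc p s ∧ s ∈ Icc p s :=
    ⟨⟨le_rfl, by linarith⟩, ⟨hpq.le, hqs.le⟩, ⟨by linarith, hrs.le⟩, ⟨by linarith, le_rfl⟩⟩
  have hmono : StrictMonoOn f (Icc p s) := strictMonoOn_of_deriv_pos (convex_Icc p s)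
    hC.continuousOn fun x hx => hpos x (interior_subset hx)
  obtain ⟨a, b, c, d, hdet, hden, hp, hq, hs⟩ :=
    exists_mobius_maps_three_points (hmono hpI hqI hpq) (hmono hqI hsI hqs) hpq hqs
  have hden' (x : ℝ) (hx : x ∈ Icc p s) : 0 < c * f x + d :=
    hden _ ⟨hmono.monotoneOn hpI hx hx.1, hmono.monotoneOn hx hsI hx.2⟩
  have hr : r ≤ mobius a b c d (f r) := le_mobius_comp_of_schwarzian_nonpos hpq hqr hrs hC
    (fun x hx => hpos x (Ioo_subset_Icc_self hx)) hS hdet hden' hp hq hs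
  have hrs' : mobius a b c d (f r) < s :=
    hs ▸ mobius_lt_mobius (hdet ▸ one_pos) (hden' r hrI) (hden' s hsI) (hmono hrI hsI hrs)
  have hcr : crossRatio p q r s ≤ crossRatio (f p) (f q) (f r) (f s) := calc
    crossRatio p q r s ≤ crossRatio p q (mobius a b c d (f r)) s :=
      crossRatio_le_crossRatio hpq hqr hr hrs'
    _ = crossRatio (f p) (f q) (f r) (f s) := by
      nth_rw 1 [← hp, ← hq, ← hs]
      exact crossRatio_mobius (hdet ▸ one_ne_zero) (hden' p hpI).ne' (hden' q hqI).ne'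
        (hden' r hrI).ne' (hden' s hsI).ne'
  calc 1 ≤ crossRatio (f p) (f q) (f r) (f s) / crossRatio p q r s :=
        (one_le_div (crossRatio_pos hpq hqr hrs)).2 hcr
    _ = _ := by
      rw [crossRatio, crossRatio, div_div_div_eq]
      ring
end
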